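/- arXiv:1411.2807 — 2 statements merged into one kernel-verified Lean document; each statement's English description precedes it below -/
import Mathlib

section
/- (Example 2: sharp rate for batch arrivals and group services.) In the SZK setting with λ_k(t) = λ(t)/k and μ_k(t) = μ(t)/k for 1 ≤ k ≤ S, where λ, μ : [0,∞) → [0,∞) are continuous, take d_1 = ⋯ = d_S = 1 (so D_{kj} = 1 for j ≥ k, 0 otherwise). Then for any two differentiable functions z*, z** : [0,∞) → ℝ^S satisfying z'(t) = B(t)z(t) + f(t) for all t ≥ 0, where f(t)_i = λ(t)/i, one has ‖D(z*(t) − z**(t))‖₁ ≤ exp(−∫₀ᵗ (λ(τ) + μ(τ)) dτ) · ‖D(z*(0) − z**(0))‖₁ for all t ≥ 0, and if in addition D(z*(0) − z**(0)) ≥ 0 componentwise, then equality holds: ‖D(z*(t) − z**(t))‖₁ = exp(−∫₀ᵗ (λ(τ) + μ(τ)) dτ) · ‖D(z*(0) − z**(0))‖₁ for all t ≥ 0. -/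
/-!
With `u = D (z* − z**)` the forcing cancels and `u' = C(t) u`, where `C = D B D⁻¹` is `λ` times
one explicit matrix plus `μ` times another. Harmonic-number identities show that `C(t)` is a
Metzler matrix (nonnegative off the diagonal) whose columns all sum to `−(λ + μ)`.
Then `v = exp (∫₀ᵗ (λ + μ)) u` solves `v' = M v` with `M = C + (λ + μ) I` Metzler with zero
column sums, so the right derivative of `‖v‖₁`, namely `∑ᵢ σᵢ (M v)ᵢ` for a sign vector `σ` of
`v`, is at most `∑ⱼ (∑ᵢ Mᵢⱼ) |vⱼ| = 0`, while `∑ᵢ vᵢ` is conserved. If `u(0) ≥ 0`, then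
`‖v(0)‖₁ = ∑ᵢ vᵢ(0) = ∑ᵢ vᵢ(t) ≤ ‖v(t)‖₁`, which forces equality.
-/

open Set

/-- The reduced matrix `B(t)` of the SZK model on `{0,…,S}` with arrival rates
`λ_k` and service rates `μ_k`: `B_{ij} = A_{ij} − A_{i0}` where `A(t)` is the
transposed intensity matrix and `A_{i0} = λ_i`; 1-based indices `1,…,S` are
encoded by `i : Fin S ↦ i+1`. -/
def szkB (S : ℕ) (lam mu : ℕ → ℝ → ℝ) (t : ℝ) : Matrix (Fin S) (Fin S) ℝ :=
  fun i j =>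
    (if (j : ℕ) < (i : ℕ) then lam ((i : ℕ) - (j : ℕ)) t
     else if (i : ℕ) < (j : ℕ) then mu ((j : ℕ) - (i : ℕ)) t
     else -((∑ k ∈ Finset.Icc 1 ((i : ℕ) + 1), mu k t) +
            ∑ k ∈ Finset.Icc 1 (S - ((i : ℕ) + 1)), lam k t))
    - lam ((i : ℕ) + 1) t

/-- The upper-triangular matrix `D` with `D_{kj} = d_k` for `j ≥ k`. -/
def triD (S : ℕ) (d : ℕ → ℝ) : Matrix (Fin S) (Fin S) ℝ :=
  fun i j => if i ≤ j then d ((i : ℕ) + 1) else 0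

open Matrix

def IsMetzler {ι : Type*} (M : Matrix ι ι ℝ) : Prop := ∀ i j, i ≠ j → 0 ≤ M i j

section Metzler

variable {ι : Type*}

theorem isMetzler_add_smul_one [DecidableEq ι] {M : Matrix ι ι ℝ} (hM : IsMetzler M)
    (c : ℝ) : IsMetzler (M + c • 1) := fun i j hij => by
  simpa [one_apply_ne hij] using hM i j hij

variable [Fintype ι]

theorem sum_mul_mulVec_le_of_isMetzler {M : Matrix ι ι ℝ} (hM : IsMetzler M) {σ v : ι → ℝ}
    (hσ : ∀ i, |σ i| ≤ 1) (hσv : ∀ i, σ i * v i = |v i|) :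
    ∑ i, σ i * (M *ᵥ v) i ≤ ∑ j, (∑ i, M i j) * |v j| := by
  simp only [Matrix.mulVec, dotProduct, Finset.mul_sum, Finset.sum_mul]
  rw [Finset.sum_comm]
  refine Finset.sum_le_sum fun j _ => Finset.sum_le_sum fun i _ => ?_
  rcases eq_or_ne i j with rfl | hij
  · rw [mul_left_comm, hσv]
  · calc σ i * (M i j * v j) = M i j * (σ i * v j) := by ring
      _ ≤ M i j * |v j| := by
        gcongr
        · exact hM i j hij
        · calc σ i * v j ≤ |σ i * v j| := le_abs_self _
            _ = |σ i| * |v j| := abs_mul _ _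
            _ ≤ |v j| := mul_le_of_le_one_left (abs_nonneg _) (hσ i)

theorem sum_add_smul_one_apply [DecidableEq ι] (M : Matrix ι ι ℝ) (c : ℝ) (j : ι) :
    ∑ i, (M + c • (1 : Matrix ι ι ℝ)) i j = ∑ i, M i j + c := by
  simp [Finset.sum_add_distrib, one_apply]

theorem sum_mulVec_apply (M : Matrix ι ι ℝ) (v : ι → ℝ) :
    ∑ i, (M *ᵥ v) i = ∑ j, (∑ i, M i j) * v j := by
  simp only [Matrix.mulVec, dotProduct, Finset.sum_mul]
  exact Finset.sum_comm

end Metzler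

theorem HasDerivWithinAt.exists_abs_Ici {g : ℝ → ℝ} {d x : ℝ}
    (h : HasDerivWithinAt g d (Ici x) x) :
    ∃ σ, |σ| ≤ 1 ∧ σ * g x = |g x| ∧ HasDerivWithinAt (fun s => |g s|) (σ * d) (Ici x) x := by
  have abs_sign_le_one (y : ℝ) : |(SignType.sign y : ℝ)| ≤ 1 := by
    rcases lt_trichotomy y 0 with h | h | h <;> simp [h]
  by_cases hx : g x = 0
  · -- at a zero of `g`, the right slopes of `|g|` are the absolute values of those of `g`
    refine ⟨SignType.sign d, abs_sign_le_one d, by simp [hx], ?_⟩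
    rw [sign_mul_self]
    rw [hasDerivWithinAt_iff_tendsto_slope, Ici_sdiff_left] at h ⊢
    refine h.abs.congr' ?_
    filter_upwards [self_mem_nhdsWithin] with s hs
    rw [slope_def_field, slope_def_field, hx, sub_zero, abs_zero, sub_zero, abs_div,
      abs_of_pos (sub_pos.mpr hs)]
  · exact ⟨SignType.sign (g x), abs_sign_le_one _, sign_mul_self _,
      (hasDerivAt_abs hx).comp_hasDerivWithinAt x h⟩

theorem le_of_exists_hasDerivWithinAt_Ici_nonpos {f : ℝ → ℝ} {a b : ℝ} (hab : a ≤ b)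
    (hf : ContinuousOn f (Icc a b))
    (hf' : ∀ x ∈ Ico a b, ∃ f', f' ≤ 0 ∧ HasDerivWithinAt f f' (Ici x) x) : f b ≤ f a :=
  image_le_of_liminf_slope_right_le_deriv_boundary (B := fun _ => f a) hf le_rfl
    continuousOn_const (fun x _ => hasDerivWithinAt_const x _ (f a))
    (fun x hx _ hr => by
      obtain ⟨f', hf'0, hf'x⟩ := hf' x hx
      exact hf'x.liminf_right_slope_le (hf'0.trans_lt hr))
    (right_mem_Icc.mpr hab)

section LinearODE

variable {ι : Type*} [Fintype ι] {v : ℝ → ι → ℝ} {M : ℝ → Matrix ι ι ℝ} {t₀ : ℝ}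

theorem antitoneOn_sum_abs_of_isMetzler
    (hv : ∀ t ∈ Ici t₀, ∀ i, HasDerivWithinAt (fun s => v s i) ((M t *ᵥ v t) i) (Ici t₀) t)
    (hM : ∀ t ∈ Ici t₀, IsMetzler (M t)) (hcol : ∀ t ∈ Ici t₀, ∀ j, ∑ i, M t i j ≤ 0) :
    AntitoneOn (fun t => ∑ i, |v t i|) (Ici t₀) := by
  intro a ha b _ hab
  refine le_of_exists_hasDerivWithinAt_Ici_nonpos (f := fun t => ∑ i, |v t i|) hab ?_
    fun x hx => ?_
  · exact continuousOn_finsetSum _ fun i _ x hx =>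
      ((hv x (Ici_subset_Ici.mpr ha hx.1) i).continuousWithinAt.mono
        (Icc_subset_Ici_self.trans (Ici_subset_Ici.mpr ha))).abs
  · have hx₀ : x ∈ Ici t₀ := Ici_subset_Ici.mpr ha hx.1
    choose σ hσ hσv hσd using fun i =>
      ((hv x hx₀ i).mono (Ici_subset_Ici.mpr hx₀)).exists_abs_Ici
    refine ⟨∑ i, σ i * (M x *ᵥ v x) i, ?_, HasDerivWithinAt.fun_sum fun i _ => hσd i⟩
    calc ∑ i, σ i * (M x *ᵥ v x) i ≤ ∑ j, (∑ i, M x i j) * |v x j| :=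
          sum_mul_mulVec_le_of_isMetzler (hM x hx₀) hσ hσv
      _ ≤ 0 := Finset.sum_nonpos fun j _ =>
          mul_nonpos_of_nonpos_of_nonneg (hcol x hx₀ j) (abs_nonneg _)

theorem sum_eq_of_colSum_eq_zero
    (hv : ∀ t ∈ Ici t₀, ∀ i, HasDerivWithinAt (fun s => v s i) ((M t *ᵥ v t) i) (Ici t₀) t)
    (hcol : ∀ t ∈ Ici t₀, ∀ j, ∑ i, M t i j = 0) {t : ℝ} (ht : t ∈ Ici t₀) :
    ∑ i, v t i = ∑ i, v t₀ i := by
  refine constant_of_has_deriv_right_zero (f := fun t => ∑ i, v t i) ?_ (fun x hx => ?_) t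
    (right_mem_Icc.mpr ht)
  · exact continuousOn_finsetSum _ fun i _ x hx =>
      (hv x hx.1 i).continuousWithinAt.mono Icc_subset_Ici_self
  · have hx₀ : x ∈ Ici t₀ := hx.1
    convert HasDerivWithinAt.fun_sum fun i _ => (hv x hx₀ i).mono (Ici_subset_Ici.mpr hx₀)
    simp [sum_mulVec_apply, hcol x hx₀]

end LinearODE

theorem ContinuousOn.hasDerivWithinAt_integral_Ici {a : ℝ → ℝ} {t₀ t : ℝ}
    (ha : ContinuousOn a (Ici t₀)) (ht : t ∈ Ici t₀) :
    HasDerivWithinAt (fun s => ∫ τ in t₀..s, a τ) (a t) (Ici t₀) t := by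
  have hext : Continuous fun τ => a (max τ t₀) :=
    ha.comp_continuous (continuous_id.max continuous_const) fun τ => le_max_right τ t₀
  have heq :
      EqOn (fun s => ∫ τ in t₀..s, a (max τ t₀)) (fun s => ∫ τ in t₀..s, a τ) (Ici t₀) :=
    fun s hs => intervalIntegral.integral_congr fun τ hτ => by
      rw [uIcc_of_le hs] at hτ
      simp only [max_eq_left hτ.1]
  have := (hext.integral_hasStrictDerivAt t₀ t).hasDerivAt.hasDerivWithinAt (s := Ici t₀)
  rw [max_eq_left ht] at this
  exact this.congr (fun s hs => (heq hs).symm) (heq ht).symm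

section ExponentialRate

variable {ι : Type*} [Fintype ι] {u : ℝ → ι → ℝ} {C : ℝ → Matrix ι ι ℝ} {a : ℝ → ℝ} {t₀ : ℝ}

theorem hasDerivWithinAt_exp_integral_smul [DecidableEq ι] (ha : ContinuousOn a (Ici t₀))
    (hu : ∀ t ∈ Ici t₀, ∀ i, HasDerivWithinAt (fun s => u s i) ((C t *ᵥ u t) i) (Ici t₀) t) :
    ∀ t ∈ Ici t₀, ∀ i, HasDerivWithinAt (fun s => (Real.exp (∫ τ in t₀..s, a τ) • u s) i)
      (((C t + a t • 1) *ᵥ (Real.exp (∫ τ in t₀..t, a τ) • u t)) i) (Ici t₀) t := by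
  intro t ht i
  refine (((ha.hasDerivWithinAt_integral_Ici ht).exp).mul (hu t ht i)).congr_deriv ?_
  simp only [add_mulVec, smul_mulVec, mulVec_smul, one_mulVec, Pi.add_apply, Pi.smul_apply,
    smul_eq_mul]
  ring

theorem sum_abs_le_exp_neg_integral_mul (ha : ContinuousOn a (Ici t₀))
    (hu : ∀ t ∈ Ici t₀, ∀ i, HasDerivWithinAt (fun s => u s i) ((C t *ᵥ u t) i) (Ici t₀) t)
    (hC : ∀ t ∈ Ici t₀, IsMetzler (C t)) (hcol : ∀ t ∈ Ici t₀, ∀ j, ∑ i, C t i j ≤ -a t)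
    {t : ℝ} (ht : t ∈ Ici t₀) :
    ∑ i, |u t i| ≤ Real.exp (-∫ τ in t₀..t, a τ) * ∑ i, |u t₀ i| := by
  classical
  have hmono := antitoneOn_sum_abs_of_isMetzler (hasDerivWithinAt_exp_integral_smul ha hu)
    (fun t ht => isMetzler_add_smul_one (hC t ht) (a t))
    (fun t ht j => by rw [sum_add_smul_one_apply]; linarith [hcol t ht j])
    self_mem_Ici ht ht
  simp only [Pi.smul_apply, smul_eq_mul, abs_mul, Real.abs_exp, ← Finset.mul_sum,
    intervalIntegral.integral_same, Real.exp_zero, one_mul] at hmono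
  rw [Real.exp_neg, ← div_eq_inv_mul, le_div_iff₀ (Real.exp_pos _), mul_comm]
  exact hmono

theorem sum_abs_eq_exp_neg_integral_mul_of_nonneg (ha : ContinuousOn a (Ici t₀))
    (hu : ∀ t ∈ Ici t₀, ∀ i, HasDerivWithinAt (fun s => u s i) ((C t *ᵥ u t) i) (Ici t₀) t)
    (hC : ∀ t ∈ Ici t₀, IsMetzler (C t)) (hcol : ∀ t ∈ Ici t₀, ∀ j, ∑ i, C t i j = -a t)
    (h₀ : ∀ i, 0 ≤ u t₀ i) {t : ℝ} (ht : t ∈ Ici t₀) :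
    ∑ i, |u t i| = Real.exp (-∫ τ in t₀..t, a τ) * ∑ i, |u t₀ i| := by
  classical
  refine le_antisymm
    (sum_abs_le_exp_neg_integral_mul ha hu hC (fun t ht j => (hcol t ht j).le) ht) ?_
  -- the rescaled solution has constant coordinate sum, which bounds its ℓ¹ norm from below
  have hsum := sum_eq_of_colSum_eq_zero (hasDerivWithinAt_exp_integral_smul ha hu)
    (fun t ht j => by rw [sum_add_smul_one_apply, hcol t ht j, neg_add_cancel]) ht
  simp only [Pi.smul_apply, smul_eq_mul, ← Finset.mul_sum,
    intervalIntegral.integral_same, Real.exp_zero, one_mul] at hsum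
  rw [Real.exp_neg, ← div_eq_inv_mul, div_le_iff₀ (Real.exp_pos _), mul_comm,
    Finset.sum_congr rfl fun i _ => abs_of_nonneg (h₀ i), ← hsum]
  exact mul_le_mul_of_nonneg_left (Finset.sum_le_sum fun i _ => le_abs_self _)
    (Real.exp_pos _).le

end ExponentialRate

theorem hasDerivWithinAt_mulVec_sub {ι : Type*} [Fintype ι] (A B : Matrix ι ι ℝ)
    {f : ι → ℝ} {z₁ z₂ : ℝ → ι → ℝ} {s : Set ℝ} {t : ℝ}
    (h₁ : ∀ i, HasDerivWithinAt (fun s => z₁ s i) ((B *ᵥ z₁ t) i + f i) s t)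
    (h₂ : ∀ i, HasDerivWithinAt (fun s => z₂ s i) ((B *ᵥ z₂ t) i + f i) s t) (i : ι) :
    HasDerivWithinAt (fun s => (A *ᵥ (z₁ s - z₂ s)) i) (((A * B) *ᵥ (z₁ t - z₂ t)) i) s t := by
  refine (HasDerivWithinAt.fun_sum fun j _ =>
    ((h₁ j).sub (h₂ j)).const_mul (A i j)).congr_deriv ?_
  rw [← mulVec_mulVec, mulVec_sub]
  simp only [add_sub_add_right_eq_sub]
  rfl

theorem sum_Ico_inv_add_one {a b : ℕ} (hab : a ≤ b) :
    ∑ k ∈ Finset.Ico a b, ((k : ℝ) + 1)⁻¹ = harmonic b - harmonic a := by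
  rw [Finset.sum_Ico_eq_sub _ hab]
  simp [harmonic]

theorem sum_Ico_inv_sub_right {a b c : ℕ} (hca : c < a) (hab : a ≤ b) :
    ∑ k ∈ Finset.Ico a b, ((k : ℝ) - c)⁻¹ =
      harmonic (b - (c + 1)) - harmonic (a - (c + 1)) := by
  induction b, hab using Nat.le_induction with
  | base => simp
  | succ b hab ih =>
    rw [Finset.sum_Ico_succ_top hab, ih, show b + 1 - (c + 1) = b - (c + 1) + 1 by omega,
      harmonic_succ, show b - (c + 1) + 1 = b - c by omega]
    push_cast [show c ≤ b by omega, Nat.cast_sub]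
    ring

theorem sum_Ico_inv_sub_left {a b c : ℕ} (hab : a ≤ b) (hbc : b ≤ c) :
    ∑ k ∈ Finset.Ico a b, ((c : ℝ) - k)⁻¹ = harmonic (c - a) - harmonic (c - b) := by
  induction b, hab using Nat.le_induction with
  | base => simp
  | succ b hab ih =>
    rw [Finset.sum_Ico_succ_top hab, ih (by omega), show c - b = c - (b + 1) + 1 by omega,
      harmonic_succ]
    push_cast [show b + 1 ≤ c by omega, Nat.cast_sub]
    ring

theorem sum_Icc_div_natCast (c : ℝ) (n : ℕ) :
    ∑ k ∈ Finset.Icc 1 n, c / (k : ℝ) = c * harmonic n := by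
  simp [harmonic_eq_sum_Icc, Finset.mul_sum, div_eq_mul_inv]

-- The coefficients of `λ` and `μ` in `B` and in `C = D B D⁻¹`, with 0-based indices.
noncomputable def arrivalB (S k j : ℕ) : ℝ :=
  (if j < k then ((k : ℝ) - j)⁻¹ else 0) - (if k = j then (harmonic (S - (k + 1)) : ℝ) else 0)
    - ((k : ℝ) + 1)⁻¹

noncomputable def serviceB (k j : ℕ) : ℝ :=
  (if k < j then ((j : ℝ) - k)⁻¹ else 0) - (if k = j then (harmonic (k + 1) : ℝ) else 0)

noncomputable def arrivalC (S i k : ℕ) : ℝ :=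
  (if k < i then ((i : ℝ) - k)⁻¹ - ((S : ℝ) - k)⁻¹ else 0)
    - (if i = k then (harmonic (S - i) : ℝ) else 0)

noncomputable def serviceC (i k : ℕ) : ℝ :=
  (if i < k then ((k : ℝ) - i)⁻¹ - ((k : ℝ) + 1)⁻¹ else 0)
    - (if i = k then (harmonic (i + 1) : ℝ) else 0)

theorem sum_Ico_arrivalB_eq_sum_range_arrivalC {S i j : ℕ} (hi : i < S) (hj : j < S) :
    ∑ k ∈ Finset.Ico i S, arrivalB S k j = ∑ k ∈ Finset.range (j + 1), arrivalC S i k := by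
  simp only [arrivalB, arrivalC, Finset.sum_sub_distrib, Finset.sum_ite_eq', Finset.sum_ite_eq,
    ← Finset.sum_filter, Finset.mem_Ico, Finset.mem_range, sum_Ico_inv_add_one hi.le]
  rcases le_or_gt i j with hij | hij
  · rw [show {k ∈ Finset.Ico i S | j < k} = Finset.Ico (j + 1) S by ext; simp; omega,
      show {k ∈ Finset.range (j + 1) | k < i} = Finset.Ico 0 i by ext; simp; omega,
      sum_Ico_inv_sub_right (by omega) (by omega), sum_Ico_inv_sub_left (by omega) (by omega),
      sum_Ico_inv_sub_left (by omega) (by omega)]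
    simp only [tsub_self, harmonic_zero, Rat.cast_zero, sub_zero, hij, hj, and_self, ↓reduceIte,
      sub_self, zero_sub, neg_sub, tsub_zero, Order.lt_add_one_iff]
    ring
  · rw [show {k ∈ Finset.Ico i S | j < k} = Finset.Ico (i : ℕ) S by ext; simp; omega,
      show {k ∈ Finset.range (j + 1) | k < i} = Finset.Ico 0 (j + 1) by ext; simp; omega,
      sum_Ico_inv_sub_right (by omega) (by omega), sum_Ico_inv_sub_left (by omega) (by omega),
      sum_Ico_inv_sub_left (by omega) (by omega)]
    simp only [hij.not_ge, false_and, ↓reduceIte, sub_zero, tsub_zero, Order.lt_add_one_iff]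
    ring

theorem sum_Ico_serviceB_eq_sum_range_serviceC {S i j : ℕ} (hj : j < S) :
    ∑ k ∈ Finset.Ico i S, serviceB k j = ∑ k ∈ Finset.range (j + 1), serviceC i k := by
  simp only [serviceB, serviceC, Finset.sum_sub_distrib, Finset.sum_ite_eq', Finset.sum_ite_eq,
    ← Finset.sum_filter, Finset.mem_Ico, Finset.mem_range]
  rcases le_or_gt i j with hij | hij
  · rw [show {k ∈ Finset.Ico i S | k < j} = Finset.Ico i j by ext; simp; omega,
      show {k ∈ Finset.range (j + 1) | i < k} = Finset.Ico (i + 1) (j + 1) by ext; simp; omega,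
      sum_Ico_inv_sub_left hij le_rfl, sum_Ico_inv_sub_right (by omega) (by omega),
      sum_Ico_inv_add_one (by omega)]
    simp only [tsub_self, harmonic_zero, Rat.cast_zero, sub_zero, hij, hj, and_self, ↓reduceIte,
      harmonic_succ, Nat.cast_add, Nat.cast_one, Rat.cast_add, Rat.cast_inv, Rat.cast_natCast,
      Rat.cast_one, Nat.reduceSubDiff, Order.lt_add_one_iff]
    ring
  · rw [show {k ∈ Finset.Ico i S | k < j} = ∅ by ext; simp; omega,
      show {k ∈ Finset.range (j + 1) | i < k} = ∅ by ext; simp; omega]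
    simp [hij.not_ge]

theorem sum_range_arrivalC {S j : ℕ} (hj : j < S) :
    ∑ i ∈ Finset.range S, arrivalC S i j = -1 := by
  simp only [arrivalC, Finset.sum_sub_distrib, Finset.sum_ite_eq', Finset.mem_range, if_pos hj]
  simp only [← Finset.sum_filter, Finset.sum_sub_distrib]
  rw [show {i ∈ Finset.range S | j < i} = Finset.Ico (j + 1) S by ext; simp; omega,
    sum_Ico_inv_sub_right (by omega) (by omega), Finset.sum_const, Nat.card_Ico, nsmul_eq_mul,
    show S - j = S - (j + 1) + 1 by omega, harmonic_succ]
  have : (S : ℝ) - j ≠ 0 := sub_ne_zero.mpr (by exact_mod_cast hj.ne')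
  push_cast [Nat.sub_self, harmonic_zero, Nat.cast_sub hj]
  rw [show (S : ℝ) - (j + 1) + 1 = S - j by ring]
  field_simp
  ring

theorem sum_range_serviceC {S j : ℕ} (hj : j < S) :
    ∑ i ∈ Finset.range S, serviceC i j = -1 := by
  simp only [serviceC, Finset.sum_sub_distrib, Finset.sum_ite_eq', Finset.mem_range, if_pos hj]
  simp only [← Finset.sum_filter, Finset.sum_sub_distrib]
  rw [show {i ∈ Finset.range S | i < j} = Finset.Ico 0 j by ext; simp; omega,
    sum_Ico_inv_sub_left (by omega) le_rfl, Finset.sum_const, Nat.card_Ico, nsmul_eq_mul,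
    harmonic_succ]
  have : (j : ℝ) + 1 ≠ 0 := by positivity
  push_cast [Nat.sub_self, Nat.sub_zero, harmonic_zero]
  field_simp
  ring

theorem arrivalC_nonneg {S i k : ℕ} (hi : i < S) (hik : i ≠ k) : 0 ≤ arrivalC S i k := by
  unfold arrivalC
  split_ifs with hki
  · have : (0 : ℝ) < i - k := by rw [sub_pos]; exact_mod_cast hki
    have : (i : ℝ) - k ≤ S - k := by gcongr
    simpa using inv_anti₀ (by assumption) this
  · simp

theorem serviceC_nonneg {i k : ℕ} (hik : i ≠ k) : 0 ≤ serviceC i k := by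
  unfold serviceC
  split_ifs with hik'
  · have : (0 : ℝ) < k - i := by rw [sub_pos]; exact_mod_cast hik'
    have : (k : ℝ) - i ≤ k + 1 := by linarith [(Nat.cast_nonneg i : (0 : ℝ) ≤ i)]
    simpa using inv_anti₀ (by assumption) this
  · simp

theorem triD_one_mul_of_eq {S : ℕ} {K L : ℕ → ℕ → ℝ}
    (h : ∀ i j, i < S → j < S →
      ∑ k ∈ Finset.Ico i S, K k j = ∑ k ∈ Finset.range (j + 1), L i k) :
    triD S (fun _ => 1) * Matrix.of (fun i j : Fin S => K i j) =
      Matrix.of (fun i j : Fin S => L i j) * triD S (fun _ => 1) := by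
  ext i j
  simp only [Matrix.mul_apply, triD, Matrix.of_apply, ite_mul, mul_ite, one_mul, mul_one,
    zero_mul, mul_zero, Fin.le_iff_val_le_val]
  rw [Fin.sum_univ_eq_sum_range (fun k => if (i : ℕ) ≤ k then K k j else 0),
    Fin.sum_univ_eq_sum_range (fun k => if k ≤ (j : ℕ) then L i k else 0),
    ← Finset.sum_filter, ← Finset.sum_filter,
    show {k ∈ Finset.range S | (i : ℕ) ≤ k} = Finset.Ico (i : ℕ) S by ext; simp; omega,
    show {k ∈ Finset.range S | k ≤ (j : ℕ)} = Finset.range (j + 1) by ext; simp; omega]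
  exact h i j i.isLt j.isLt

theorem szkB_eq_smul_add_smul (S : ℕ) (lamb mub : ℝ → ℝ) (t : ℝ) :
    szkB S (fun k t => lamb t / k) (fun k t => mub t / k) t =
      lamb t • Matrix.of (fun i j : Fin S => arrivalB S i j) +
        mub t • Matrix.of (fun i j : Fin S => serviceB i j) := by
  ext i j
  simp only [szkB, arrivalB, serviceB, Matrix.add_apply, Matrix.smul_apply, Matrix.of_apply,
    smul_eq_mul, sum_Icc_div_natCast]
  rcases lt_trichotomy (j : ℕ) i with h | h | h
  · simp only [h, h.not_gt, h.ne', ↓reduceIte, Nat.cast_sub h.le, div_eq_mul_inv, Nat.cast_add,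
      Nat.cast_one, sub_zero, sub_self, mul_zero, add_zero]
    ring
  · simp only [h, lt_self_iff_false, ↓reduceIte, harmonic_succ, Nat.cast_add, Nat.cast_one,
      Rat.cast_add, Rat.cast_inv, Rat.cast_natCast, Rat.cast_one, neg_add_rev, div_eq_mul_inv,
      zero_sub]
    ring
  · simp only [h, h.not_gt, h.ne, ↓reduceIte, Nat.cast_sub h.le, div_eq_mul_inv, Nat.cast_add,
      Nat.cast_one, sub_self, zero_sub, mul_neg, sub_zero]
    ring

noncomputable def szkC (S : ℕ) (l m : ℝ) : Matrix (Fin S) (Fin S) ℝ :=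
  l • Matrix.of (fun i j : Fin S => arrivalC S i j) +
    m • Matrix.of (fun i j : Fin S => serviceC i j)

theorem triD_mul_szkB (S : ℕ) (lamb mub : ℝ → ℝ) (t : ℝ) :
    triD S (fun _ => 1) * szkB S (fun k t => lamb t / k) (fun k t => mub t / k) t =
      szkC S (lamb t) (mub t) * triD S (fun _ => 1) := by
  rw [szkB_eq_smul_add_smul, Matrix.mul_add, Matrix.mul_smul, Matrix.mul_smul,
    triD_one_mul_of_eq fun _ _ hi hj => sum_Ico_arrivalB_eq_sum_range_arrivalC hi hj,
    triD_one_mul_of_eq fun _ _ _ hj => sum_Ico_serviceB_eq_sum_range_serviceC hj, szkC,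
    Matrix.add_mul, Matrix.smul_mul, Matrix.smul_mul]

theorem isMetzler_szkC {S : ℕ} {l m : ℝ} (hl : 0 ≤ l) (hm : 0 ≤ m) : IsMetzler (szkC S l m) :=
  fun i j hij => by
    have hij' : (i : ℕ) ≠ j := Fin.val_ne_of_ne hij
    simp only [szkC, Matrix.add_apply, Matrix.smul_apply, Matrix.of_apply, smul_eq_mul]
    exact add_nonneg (mul_nonneg hl (arrivalC_nonneg i.isLt hij'))
      (mul_nonneg hm (serviceC_nonneg hij'))

theorem sum_szkC_apply (S : ℕ) (l m : ℝ) (j : Fin S) : ∑ i, szkC S l m i j = -(l + m) := by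
  simp only [szkC, Matrix.add_apply, Matrix.smul_apply, Matrix.of_apply, smul_eq_mul,
    Finset.sum_add_distrib, ← Finset.mul_sum]
  rw [Fin.sum_univ_eq_sum_range (fun i => arrivalC S i j),
    Fin.sum_univ_eq_sum_range (fun i => serviceC i j), sum_range_arrivalC j.isLt,
    sum_range_serviceC j.isLt]
  ring

theorem szk_batch_example_sharp_rate_general
    (S : ℕ)
    (lamb mub : ℝ → ℝ)
    (hlamb : ContinuousOn lamb (Ici 0) ∧ ∀ t ∈ Ici (0 : ℝ), 0 ≤ lamb t)
    (hmub : ContinuousOn mub (Ici 0) ∧ ∀ t ∈ Ici (0 : ℝ), 0 ≤ mub t)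
    (f : ℝ → Fin S → ℝ)
    (z₁ z₂ : ℝ → Fin S → ℝ)
    (hz₁ : ∀ t ∈ Ici (0 : ℝ), ∀ i, HasDerivWithinAt (fun s => z₁ s i)
      ((szkB S (fun k t => lamb t / (k : ℝ)) (fun k t => mub t / (k : ℝ)) t).mulVec
        (z₁ t) i + f t i) (Ici 0) t)
    (hz₂ : ∀ t ∈ Ici (0 : ℝ), ∀ i, HasDerivWithinAt (fun s => z₂ s i)
      ((szkB S (fun k t => lamb t / (k : ℝ)) (fun k t => mub t / (k : ℝ)) t).mulVec
        (z₂ t) i + f t i) (Ici 0) t) :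
    (∀ t ∈ Ici (0 : ℝ),
      ∑ i, |(triD S (fun _ => 1)).mulVec (z₁ t - z₂ t) i| ≤
        Real.exp (-∫ τ in (0 : ℝ)..t, (lamb τ + mub τ)) *
          ∑ i, |(triD S (fun _ => 1)).mulVec (z₁ 0 - z₂ 0) i|) ∧
    ((∀ i, 0 ≤ (triD S (fun _ => 1)).mulVec (z₁ 0 - z₂ 0) i) →
      ∀ t ∈ Ici (0 : ℝ),
        ∑ i, |(triD S (fun _ => 1)).mulVec (z₁ t - z₂ t) i| =
          Real.exp (-∫ τ in (0 : ℝ)..t, (lamb τ + mub τ)) *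
            ∑ i, |(triD S (fun _ => 1)).mulVec (z₁ 0 - z₂ 0) i|) := by
  have hrate : ContinuousOn (fun τ => lamb τ + mub τ) (Ici 0) := hlamb.1.add hmub.1
  have hu : ∀ t ∈ Ici (0 : ℝ), ∀ i,
      HasDerivWithinAt (fun s => (triD S (fun _ => 1) *ᵥ (z₁ s - z₂ s)) i)
        ((szkC S (lamb t) (mub t) *ᵥ (triD S (fun _ => 1) *ᵥ (z₁ t - z₂ t))) i) (Ici 0) t := by
    intro t ht i
    rw [mulVec_mulVec, ← triD_mul_szkB]
    exact hasDerivWithinAt_mulVec_sub _ _ (hz₁ t ht) (hz₂ t ht) i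
  have hC t (ht : t ∈ Ici (0 : ℝ)) := isMetzler_szkC (S := S) (hlamb.2 t ht) (hmub.2 t ht)
  have hcol t (_ : t ∈ Ici (0 : ℝ)) := sum_szkC_apply S (lamb t) (mub t)
  exact ⟨fun t ht =>
      sum_abs_le_exp_neg_integral_mul hrate hu hC (fun t ht j => (hcol t ht j).le) ht,
    fun h₀ t ht => sum_abs_eq_exp_neg_integral_mul_of_nonneg hrate hu hC hcol h₀ ht⟩

/-- Example 2 (sharp rate for batch arrivals and group services):
the SZK model with `λ_k(t) = λ(t)/k`, `μ_k(t) = μ(t)/k` and all `d_k = 1`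
satisfies
`‖D(z*(t) − z**(t))‖₁ ≤ exp(−∫₀ᵗ (λ+μ)) ‖D(z*(0) − z**(0))‖₁` for any initial
conditions, with equality whenever `D(z*(0) − z**(0)) ≥ 0` componentwise. -/
theorem szk_batch_example_sharp_rate
    (S : ℕ) (hS : 1 ≤ S)
    (lamb mub : ℝ → ℝ)
    (hlamb : ContinuousOn lamb (Ici 0) ∧ ∀ t ∈ Ici (0 : ℝ), 0 ≤ lamb t)
    (hmub : ContinuousOn mub (Ici 0) ∧ ∀ t ∈ Ici (0 : ℝ), 0 ≤ mub t)
    (f : ℝ → Fin S → ℝ)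
    (hf : ∀ t, ∀ i : Fin S, f t i = lamb t / (((i : ℕ) + 1 : ℕ) : ℝ))
    (z₁ z₂ : ℝ → Fin S → ℝ)
    (hz₁ : ∀ t ∈ Ici (0 : ℝ), ∀ i, HasDerivWithinAt (fun s => z₁ s i)
      ((szkB S (fun k t => lamb t / (k : ℝ)) (fun k t => mub t / (k : ℝ)) t).mulVec
        (z₁ t) i + f t i) (Ici 0) t)
    (hz₂ : ∀ t ∈ Ici (0 : ℝ), ∀ i, HasDerivWithinAt (fun s => z₂ s i)
      ((szkB S (fun k t => lamb t / (k : ℝ)) (fun k t => mub t / (k : ℝ)) t).mulVec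
        (z₂ t) i + f t i) (Ici 0) t) :
    (∀ t ∈ Ici (0 : ℝ),
      ∑ i, |(triD S (fun _ => 1)).mulVec (z₁ t - z₂ t) i| ≤
        Real.exp (-∫ τ in (0 : ℝ)..t, (lamb τ + mub τ)) *
          ∑ i, |(triD S (fun _ => 1)).mulVec (z₁ 0 - z₂ 0) i|) ∧
    ((∀ i, 0 ≤ (triD S (fun _ => 1)).mulVec (z₁ 0 - z₂ 0) i) →
      ∀ t ∈ Ici (0 : ℝ),
        ∑ i, |(triD S (fun _ => 1)).mulVec (z₁ t - z₂ t) i| =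
          Real.exp (-∫ τ in (0 : ℝ)..t, (lamb τ + mub τ)) *
            ∑ i, |(triD S (fun _ => 1)).mulVec (z₁ 0 - z₂ 0) i|) :=
  szk_batch_example_sharp_rate_general S lamb mub hlamb hmub f z₁ z₂ hz₁ hz₂
end

section
/- (Theorem 4, lower bound for a chain with absorption in zero.) In the absorbing-state setting, let D = diag(d_1,…,d_S) with positive entries, set α_k(t) = ∑_{j=0, j≠k}^{S} q_{kj}(t) − ∑_{i=1, i≠k}^{S} (d_i/d_k) q_{ki}(t) for 1 ≤ k ≤ S, and β_*(t) = max_{1≤k≤S} α_k(t). Let z*, z** : [0,∞) → ℝ^S be differentiable with z'(t) = B(t)z(t) for all t ≥ 0. If z*(0) − z**(0) ≥ 0 componentwise, then ‖D(z*(t) − z**(t))‖₁ ≥ exp(−∫₀ᵗ β_*(τ) dτ) · ‖D(z*(0) − z**(0))‖₁ for all t ≥ 0. -/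
/-
The difference `w = z₁ - z₂` solves `w' = B w`, and `B` has nonnegative off-diagonal entries, so
`w` stays componentwise nonnegative: after the shift `e^{Ct} w` the system matrix is entrywise
nonnegative, and then the total negative part of the solution obeys a Grönwall inequality
starting from `0`. For `w ≥ 0` the norm `‖D w‖₁` is the linear functional `v = ∑ dᵢ wᵢ`, and the
column identity `∑ᵢ dᵢ Bᵢₖ = -dₖ αₖ` gives `v' = -∑ₖ dₖ αₖ wₖ ≥ -β₋ v`, which integrates to the
bound.
-/

open Set Filter Topology Matrix

/-- The reduced matrix `B(t)` of a Markov chain on `{0,…,S}` with transition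
intensities `q_{ij}(t)`: `B_{ij} = q_{ji}` for `i ≠ j` and
`B_{ii} = −∑_{j≠i} q_{ij}` (1-based indices `1,…,S` encoded by
`i : Fin S ↦ i+1`). -/
def absB (S : ℕ) (q : ℕ → ℕ → ℝ → ℝ) (t : ℝ) : Matrix (Fin S) (Fin S) ℝ :=
  fun i j =>
    if i = j then -∑ k ∈ (Finset.range (S + 1)).erase ((i : ℕ) + 1), q ((i : ℕ) + 1) k t
    else q ((j : ℕ) + 1) ((i : ℕ) + 1) t

section NonnegativeSystems

lemma negPart_le_negPart_sub_add {α : Type*} [AddCommGroup α] [LinearOrder α]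
    [IsOrderedAddMonoid α] (a b : α) : b⁻ ≤ (b - a)⁻ + a⁻ := by
  rw [negPart_def b]
  refine max_le ?_ (add_nonneg (negPart_nonneg _) (negPart_nonneg _))
  calc -b = -(b - a) + -a := by abel
    _ ≤ (b - a)⁻ + a⁻ := add_le_add (neg_le_negPart _) (neg_le_negPart _)

lemma negPart_mul_of_nonneg {c : ℝ} (hc : 0 ≤ c) (a : ℝ) : (c * a)⁻ = c * a⁻ := by
  simp only [negPart_def, ← mul_neg, mul_max_of_nonneg _ _ hc, mul_zero]

lemma Real.continuous_negPart : Continuous fun a : ℝ => a⁻ := by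
  simp only [negPart_def]
  exact continuous_neg.max continuous_const

variable {ι : Type*} [Fintype ι]

lemma sum_negPart_mulVec_le {M : Matrix ι ι ℝ} {K : ℝ} (hM : ∀ i j, 0 ≤ M i j)
    (hK : ∀ j, ∑ i, M i j ≤ K) (y : ι → ℝ) : ∑ i, ((M *ᵥ y) i)⁻ ≤ K * ∑ i, (y i)⁻ := by
  have hrow : ∀ i, ((M *ᵥ y) i)⁻ ≤ ∑ j, M i j * (y j)⁻ := fun i => by
    refine max_le ?_ (Finset.sum_nonneg fun j _ => mul_nonneg (hM i j) (negPart_nonneg _))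
    rw [mulVec, dotProduct, ← Finset.sum_neg_distrib]
    exact Finset.sum_le_sum fun j _ => by
      rw [← mul_neg]; exact mul_le_mul_of_nonneg_left (neg_le_negPart _) (hM i j)
  calc ∑ i, ((M *ᵥ y) i)⁻ ≤ ∑ i, ∑ j, M i j * (y j)⁻ := Finset.sum_le_sum fun i _ => hrow i
    _ = ∑ j, (∑ i, M i j) * (y j)⁻ := by rw [Finset.sum_comm]; simp only [Finset.sum_mul]
    _ ≤ ∑ j, K * (y j)⁻ :=
      Finset.sum_le_sum fun j _ => mul_le_mul_of_nonneg_right (hK j) (negPart_nonneg _)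
    _ = K * ∑ i, (y i)⁻ := (Finset.mul_sum _ _ _).symm

lemma eventually_slope_sum_negPart_lt {y : ℝ → ι → ℝ} {y' : ι → ℝ} {x r : ℝ}
    (hy : HasDerivWithinAt y y' (Ici x) x) (hr : ∑ i, (y' i)⁻ < r) :
    ∀ᶠ z in 𝓝[>] x, (z - x)⁻¹ * (∑ i, (y z i)⁻ - ∑ i, (y x i)⁻) < r := by
  have hslope : Tendsto (slope y x) (𝓝[>] x) (𝓝 y') := by
    simpa [hasDerivWithinAt_iff_tendsto_slope] using hy
  have hlim : Tendsto (fun z => ∑ i, (slope y x z i)⁻) (𝓝[>] x) (𝓝 (∑ i, (y' i)⁻)) :=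
    ((continuous_finsetSum _ fun i _ => Real.continuous_negPart.comp (continuous_apply i)).tendsto
      y').comp hslope
  filter_upwards [hlim.eventually_lt_const hr, self_mem_nhdsWithin] with z hz (hxz : x < z)
  have hc : 0 ≤ (z - x)⁻¹ := inv_nonneg.2 (sub_nonneg.2 hxz.le)
  refine lt_of_le_of_lt ?_ hz
  rw [← Finset.sum_sub_distrib, Finset.mul_sum]
  refine Finset.sum_le_sum fun i _ => ?_
  rw [slope_def_module, Pi.smul_apply, Pi.sub_apply, smul_eq_mul, negPart_mul_of_nonneg hc]
  exact mul_le_mul_of_nonneg_left (sub_le_iff_le_add.2 (negPart_le_negPart_sub_add _ _)) hc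

lemma nonneg_of_hasDerivWithinAt_nonneg_mulVec {M : ℝ → Matrix ι ι ℝ} {y : ℝ → ι → ℝ}
    {a b K : ℝ} (hyc : ContinuousOn y (Icc a b))
    (hy : ∀ t ∈ Ico a b, HasDerivWithinAt y (M t *ᵥ y t) (Ici t) t)
    (hM : ∀ t ∈ Ico a b, ∀ i j, 0 ≤ M t i j) (hK : ∀ t ∈ Ico a b, ∀ j, ∑ i, M t i j ≤ K)
    (ha : 0 ≤ y a) : ∀ t ∈ Icc a b, 0 ≤ y t := by
  set φ : ℝ → ℝ := fun t => ∑ i, (y t i)⁻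
  have hφc : ContinuousOn φ (Icc a b) :=
    continuousOn_finsetSum _ fun i _ =>
      Real.continuous_negPart.comp_continuousOn ((continuous_apply i).comp_continuousOn hyc)
  have hφa : φ a ≤ 0 := (Finset.sum_eq_zero fun i _ => negPart_eq_zero.2 (ha i)).le
  have hφ := le_gronwallBound_of_liminf_deriv_right_le (ε := 0) hφc
    (fun t ht r hr => (eventually_slope_sum_negPart_lt (hy t ht) hr).frequently) hφa
    (fun t ht => by simpa using sum_negPart_mulVec_le (hM t ht) (hK t ht) (y t))
  intro t ht i
  have hφt : φ t = 0 := le_antisymm (by simpa [gronwallBound_ε0_δ0] using hφ t ht)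
    (Finset.sum_nonneg fun i _ => negPart_nonneg _)
  exact negPart_eq_zero.1 <|
    (Finset.sum_eq_zero_iff_of_nonneg fun i _ => negPart_nonneg _).1 hφt i (Finset.mem_univ i)

lemma exists_abs_apply_le_of_continuousOn {A : ℝ → Matrix ι ι ℝ} {s : Set ℝ} (hs : IsCompact s)
    (hA : ∀ i j, ContinuousOn (fun t => A t i j) s) : ∃ C, ∀ t ∈ s, ∀ i j, |A t i j| ≤ C := by
  obtain ⟨C, hC⟩ := hs.exists_bound_of_continuousOn (f := fun t (i j : ι) => A t i j)
    (continuousOn_pi.2 fun i => continuousOn_pi.2 fun j => hA i j)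
  exact ⟨C, fun t ht i j =>
    ((norm_le_pi_norm (fun j => A t i j) j).trans (norm_le_pi_norm (fun i j => A t i j) i)).trans
      (hC t ht)⟩

variable [DecidableEq ι]

lemma hasDerivWithinAt_exp_smul_mulVec {A : ℝ → Matrix ι ι ℝ} {w : ℝ → ι → ℝ} {s : Set ℝ}
    {t : ℝ} (C : ℝ) (hw : HasDerivWithinAt w (A t *ᵥ w t) s t) :
    HasDerivWithinAt (fun u => Real.exp (C * u) • w u)
      ((A t + C • 1) *ᵥ (Real.exp (C * t) • w t)) s t := by
  refine (((hasDerivAt_id t).const_mul C).exp.hasDerivWithinAt.smul hw).congr_deriv ?_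
  rw [add_mulVec, smul_mulVec, one_mulVec, mulVec_smul, smul_smul]
  simp only [id, mul_one, mul_comm _ C]

theorem nonneg_of_hasDerivWithinAt_mulVec_of_offDiag_nonneg {A : ℝ → Matrix ι ι ℝ}
    {w : ℝ → ι → ℝ} {a : ℝ} (hAc : ∀ i j, ContinuousOn (fun t => A t i j) (Ici a))
    (hoff : ∀ t ∈ Ici a, ∀ i j, i ≠ j → 0 ≤ A t i j)
    (hw : ∀ t ∈ Ici a, HasDerivWithinAt w (A t *ᵥ w t) (Ici a) t) (ha : 0 ≤ w a) :
    ∀ t ∈ Ici a, 0 ≤ w t := by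
  intro T hT
  obtain ⟨C, hC⟩ := exists_abs_apply_le_of_continuousOn (isCompact_Icc (a := a) (b := T))
    fun i j => (hAc i j).mono Icc_subset_Ici_self
  set M : ℝ → Matrix ι ι ℝ := fun t => A t + C • 1
  have hM_apply : ∀ t i j, M t i j = A t i j + if i = j then C else 0 := fun t i j => by
    simp only [M, Matrix.add_apply, Matrix.smul_apply, Matrix.one_apply, smul_eq_mul, mul_ite,
      mul_one, mul_zero]
  have hM : ∀ t ∈ Ico a T, ∀ i j, 0 ≤ M t i j := by
    intro t ht i j
    rw [hM_apply]
    split_ifs with hij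
    · linarith [neg_le_of_abs_le (hC t (Ico_subset_Icc_self ht) i j)]
    · linarith [hoff t ht.1 i j hij]
  have hK : ∀ t ∈ Ico a T, ∀ j, ∑ i, M t i j ≤ Fintype.card ι * (2 * C) := by
    intro t ht j
    refine (Finset.sum_le_sum fun i _ => (?_ : M t i j ≤ 2 * C)).trans (by simp)
    have hAij := hC t (Ico_subset_Icc_self ht) i j
    rw [hM_apply]
    split_ifs <;> linarith [le_of_abs_le hAij, (abs_nonneg _).trans hAij]
  have hy : ∀ t ∈ Ici a, HasDerivWithinAt (fun u => Real.exp (C * u) • w u)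
      (M t *ᵥ (Real.exp (C * t) • w t)) (Ici a) t :=
    fun t ht => hasDerivWithinAt_exp_smul_mulVec C (hw t ht)
  have hpos := nonneg_of_hasDerivWithinAt_nonneg_mulVec
    (fun t ht => (hy t ht.1).continuousWithinAt.mono Icc_subset_Ici_self)
    (fun t ht => (hy t ht.1).mono (Ici_subset_Ici.2 ht.1)) hM hK
    (smul_nonneg (Real.exp_pos _).le ha) T ⟨hT, le_rfl⟩
  intro i
  exact (mul_nonneg_iff_of_pos_left (Real.exp_pos (C * T))).1 (hpos i)

end NonnegativeSystems

lemma ContinuousOn.ciSup_apply {ι α X : Type*} [Fintype ι] [TopologicalSpace X]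
    [ConditionallyCompleteLinearOrder α] [TopologicalSpace α] [OrderClosedTopology α]
    {f : ι → X → α} {s : Set X} (hf : ∀ i, ContinuousOn (f i) s) :
    ContinuousOn (fun x => ⨆ i, f i x) s := by
  cases isEmpty_or_nonempty ι
  · simp only [iSup_of_empty']
    exact continuousOn_const
  · simp only [← Finset.sup'_univ_eq_ciSup]
    exact ContinuousOn.finset_sup'_apply _ fun i _ => hf i

theorem exp_neg_integral_mul_le_of_hasDerivWithinAt {β v v' : ℝ → ℝ} {a : ℝ}
    (hβ : ContinuousOn β (Ici a)) (hv : ∀ t ∈ Ici a, HasDerivWithinAt v (v' t) (Ici a) t)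
    (hle : ∀ t ∈ Ioi a, -β t * v t ≤ v' t) :
    ∀ t ∈ Ici a, Real.exp (-∫ τ in a..t, β τ) * v a ≤ v t := by
  -- constant to the left of `a`, so that its primitive is differentiable everywhere
  set βe : ℝ → ℝ := fun t => β (max t a)
  have hβe : Continuous βe := hβ.comp_continuous (continuous_id.max continuous_const)
    fun t => le_max_right t a
  set F : ℝ → ℝ := fun t => ∫ τ in a..t, βe τ
  have hF : ∀ t, HasDerivAt F (βe t) t := fun t =>
    intervalIntegral.integral_hasDerivAt_right (hβe.intervalIntegrable _ _)
      (hβe.stronglyMeasurableAtFilter _ _) hβe.continuousAt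
  have hmono : MonotoneOn (fun t => Real.exp (F t) * v t) (Ici a) := by
    refine monotoneOn_of_hasDerivWithinAt_nonneg (convex_Ici a)
      (f' := fun t => Real.exp (F t) * βe t * v t + Real.exp (F t) * v' t)
      (fun t ht => ((hF t).continuousAt.continuousWithinAt.rexp).mul
        (hv t ht).continuousWithinAt) (fun t ht => ?_) fun t ht => ?_
    · rw [interior_Ici] at ht ⊢
      exact ((hF t).hasDerivWithinAt.exp.mul ((hv t (mem_Ici_of_Ioi ht)).mono Ioi_subset_Ici_self))
    · rw [interior_Ici] at ht
      rw [show βe t = β t by simp [βe, max_eq_left (le_of_lt (mem_Ioi.1 ht))]]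
      nlinarith [hle t ht, Real.exp_pos (F t)]
  intro t ht
  have hFt : F t = ∫ τ in a..t, β τ :=
    intervalIntegral.integral_congr fun τ hτ => by
      rw [uIcc_of_le ht] at hτ
      simp [βe, max_eq_left hτ.1]
  have h := hmono self_mem_Ici ht ht
  simp only [F, intervalIntegral.integral_same, Real.exp_zero, one_mul] at h
  rw [← hFt, Real.exp_neg, inv_mul_le_iff₀ (Real.exp_pos _)]
  exact h

lemma Finset.sum_Icc_one_eq_sum_fin {M : Type*} [AddCommMonoid M] (S : ℕ) (f : ℕ → M) :
    ∑ i ∈ Finset.Icc 1 S, f i = ∑ i : Fin S, f ((i : ℕ) + 1) := by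
  rw [Fin.sum_univ_eq_sum_range (fun i => f (i + 1)), Finset.range_eq_Ico, Finset.sum_Ico_add',
    zero_add, Finset.Ico_add_one_right_eq_Icc]

section absB

variable {S : ℕ} {q : ℕ → ℕ → ℝ → ℝ}

lemma continuousOn_absB_apply {s : Set ℝ}
    (hq : ∀ i j, i ≤ S → j ≤ S → i ≠ j → ContinuousOn (q i j) s) (i j : Fin S) :
    ContinuousOn (fun t => absB S q t i j) s := by
  unfold absB
  split_ifs with hij
  · refine (continuousOn_finsetSum _ fun k hk => hq _ k i.isLt ?_ ?_).neg
    · exact Nat.lt_succ_iff.1 (Finset.mem_range.1 (Finset.mem_of_mem_erase hk))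
    · exact (Finset.ne_of_mem_erase hk).symm
  · exact hq _ _ j.isLt i.isLt fun h => hij (Fin.ext (Nat.succ_injective h)).symm

lemma absB_apply_nonneg {t : ℝ} (hq : ∀ i j, i ≤ S → j ≤ S → i ≠ j → 0 ≤ q i j t)
    {i j : Fin S} (hij : i ≠ j) : 0 ≤ absB S q t i j := by
  simp only [absB, if_neg hij]
  exact hq _ _ j.isLt i.isLt fun h => hij (Fin.ext (Nat.succ_injective h)).symm

noncomputable def absAlpha (S : ℕ) (q : ℕ → ℕ → ℝ → ℝ) (d : ℕ → ℝ) (k : Fin S) (t : ℝ) : ℝ :=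
  (∑ j ∈ (Finset.range (S + 1)).erase ((k : ℕ) + 1), q ((k : ℕ) + 1) j t) -
    ∑ i ∈ (Finset.Icc 1 S).erase ((k : ℕ) + 1), d i / d ((k : ℕ) + 1) * q ((k : ℕ) + 1) i t

lemma continuousOn_absAlpha {d : ℕ → ℝ} {s : Set ℝ}
    (hq : ∀ i j, i ≤ S → j ≤ S → i ≠ j → ContinuousOn (q i j) s) (k : Fin S) :
    ContinuousOn (absAlpha S q d k) s := by
  refine (continuousOn_finsetSum _ fun j hj => hq _ j k.isLt ?_ ?_).sub
    (continuousOn_finsetSum _ fun i hi => continuousOn_const.mul (hq _ i k.isLt ?_ ?_))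
  · exact Nat.lt_succ_iff.1 (Finset.mem_range.1 (Finset.mem_of_mem_erase hj))
  · exact (Finset.ne_of_mem_erase hj).symm
  · exact (Finset.mem_Icc.1 (Finset.mem_of_mem_erase hi)).2
  · exact (Finset.ne_of_mem_erase hi).symm

lemma vecMul_absB_apply {d : ℕ → ℝ} (t : ℝ) (k : Fin S) (hdk : d ((k : ℕ) + 1) ≠ 0) :
    ((fun i : Fin S => d ((i : ℕ) + 1)) ᵥ* absB S q t) k =
      -(d ((k : ℕ) + 1) * absAlpha S q d k t) := by
  have hk : (k : ℕ) + 1 ∈ Finset.Icc 1 S := Finset.mem_Icc.2 ⟨Nat.le_add_left _ _, k.isLt⟩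
  have hoff : ∑ i ∈ Finset.univ.erase k, d ((i : ℕ) + 1) * absB S q t i k =
      ∑ m ∈ (Finset.Icc 1 S).erase ((k : ℕ) + 1), d m * q ((k : ℕ) + 1) m t := by
    rw [Finset.sum_congr rfl fun i hi => by rw [absB, if_neg (Finset.ne_of_mem_erase hi)],
      Finset.sum_erase_eq_sub (Finset.mem_univ k), Finset.sum_erase_eq_sub hk,
      Finset.sum_Icc_one_eq_sum_fin S fun m => d m * q ((k : ℕ) + 1) m t]
  have hscale : d ((k : ℕ) + 1) * ∑ m ∈ (Finset.Icc 1 S).erase ((k : ℕ) + 1),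
      d m / d ((k : ℕ) + 1) * q ((k : ℕ) + 1) m t =
        ∑ m ∈ (Finset.Icc 1 S).erase ((k : ℕ) + 1), d m * q ((k : ℕ) + 1) m t := by
    rw [Finset.mul_sum]
    exact Finset.sum_congr rfl fun m _ => by field_simp
  rw [vecMul, dotProduct, ← Finset.add_sum_erase _ _ (Finset.mem_univ k), hoff, absAlpha, absB,
    if_pos rfl]
  linear_combination -hscale

lemma neg_mul_dotProduct_le_dotProduct_absB_mulVec {d : ℕ → ℝ} {t β : ℝ} {w : Fin S → ℝ}
    (hd : ∀ k : Fin S, 0 < d ((k : ℕ) + 1)) (hw : 0 ≤ w)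
    (hβ : ∀ k, absAlpha S q d k t ≤ β) :
    -β * ((fun i : Fin S => d ((i : ℕ) + 1)) ⬝ᵥ w) ≤
      (fun i : Fin S => d ((i : ℕ) + 1)) ⬝ᵥ (absB S q t *ᵥ w) := by
  rw [dotProduct_mulVec, dotProduct, dotProduct, Finset.mul_sum]
  refine Finset.sum_le_sum fun k _ => ?_
  rw [vecMul_absB_apply t k (hd k).ne']
  nlinarith [mul_nonneg (mul_nonneg (hd k).le (hw k)) (sub_nonneg.2 (hβ k))]

end absB

lemma sum_abs_diagonal_mulVec {ι : Type*} [Fintype ι] [DecidableEq ι] {c w : ι → ℝ}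
    (hc : 0 ≤ c) (hw : 0 ≤ w) : ∑ i, |(Matrix.diagonal c *ᵥ w) i| = c ⬝ᵥ w :=
  Finset.sum_congr rfl fun i _ => by rw [mulVec_diagonal, abs_of_nonneg (mul_nonneg (hc i) (hw i))]

theorem absorbing_lower_bound_general
    (S : ℕ)
    (q : ℕ → ℕ → ℝ → ℝ) (d : ℕ → ℝ)
    (hq : ∀ i j, i ≤ S → j ≤ S → i ≠ j →
      ContinuousOn (q i j) (Ici 0) ∧ ∀ t ∈ Ici (0 : ℝ), 0 ≤ q i j t)
    (hd : ∀ k, 1 ≤ k → k ≤ S → 0 < d k)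
    (D : Matrix (Fin S) (Fin S) ℝ)
    (hD : D = Matrix.diagonal (fun i : Fin S => d ((i : ℕ) + 1)))
    (alpha : Fin S → ℝ → ℝ)
    (halpha : ∀ k t, alpha k t =
      (∑ j ∈ (Finset.range (S + 1)).erase ((k : ℕ) + 1), q ((k : ℕ) + 1) j t) -
        ∑ i ∈ (Finset.Icc 1 S).erase ((k : ℕ) + 1),
          d i / d ((k : ℕ) + 1) * q ((k : ℕ) + 1) i t)
    (blow : ℝ → ℝ) (hblow : ∀ t, blow t = ⨆ k, alpha k t)
    (z₁ z₂ : ℝ → Fin S → ℝ)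
    (hz₁ : ∀ t ∈ Ici (0 : ℝ), ∀ i, HasDerivWithinAt (fun s => z₁ s i)
      ((absB S q t).mulVec (z₁ t) i) (Ici 0) t)
    (hz₂ : ∀ t ∈ Ici (0 : ℝ), ∀ i, HasDerivWithinAt (fun s => z₂ s i)
      ((absB S q t).mulVec (z₂ t) i) (Ici 0) t)
    (hinit : ∀ i, 0 ≤ z₁ 0 i - z₂ 0 i) :
    ∀ t ∈ Ici (0 : ℝ),
      Real.exp (-∫ τ in (0 : ℝ)..t, blow τ) * ∑ i, |D.mulVec (z₁ 0 - z₂ 0) i| ≤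
        ∑ i, |D.mulVec (z₁ t - z₂ t) i| := by
  set c : Fin S → ℝ := fun i => d ((i : ℕ) + 1)
  have hc : ∀ k, 0 < c k := fun k => hd _ (Nat.le_add_left _ _) k.isLt
  have halpha' : alpha = absAlpha S q d := funext₂ halpha
  have hq_cont : ∀ i j, i ≤ S → j ≤ S → i ≠ j → ContinuousOn (q i j) (Ici 0) :=
    fun i j hi hj hij => (hq i j hi hj hij).1
  have hw : ∀ t ∈ Ici (0 : ℝ), HasDerivWithinAt (fun s => z₁ s - z₂ s)
      (absB S q t *ᵥ (z₁ t - z₂ t)) (Ici 0) t := fun t ht => by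
    rw [mulVec_sub]
    exact (hasDerivWithinAt_pi.2 (hz₁ t ht)).sub (hasDerivWithinAt_pi.2 (hz₂ t ht))
  have hw_nonneg := nonneg_of_hasDerivWithinAt_mulVec_of_offDiag_nonneg
    (continuousOn_absB_apply hq_cont)
    (fun t ht i j hij => absB_apply_nonneg (fun i j hi hj hij => (hq i j hi hj hij).2 t ht) hij)
    hw hinit
  have hblow_cont : ContinuousOn blow (Ici 0) := by
    rw [funext hblow, halpha']
    exact ContinuousOn.ciSup_apply (continuousOn_absAlpha hq_cont)
  have hv : ∀ t ∈ Ici (0 : ℝ), HasDerivWithinAt (fun s => c ⬝ᵥ (z₁ s - z₂ s))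
      (c ⬝ᵥ (absB S q t *ᵥ (z₁ t - z₂ t))) (Ici 0) t := fun t ht =>
    HasDerivWithinAt.fun_sum fun i _ => (hasDerivWithinAt_pi.1 (hw t ht) i).const_mul (c i)
  intro t ht
  rw [hD, sum_abs_diagonal_mulVec (fun i => (hc i).le) (hw_nonneg 0 self_mem_Ici),
    sum_abs_diagonal_mulVec (fun i => (hc i).le) (hw_nonneg t ht)]
  refine exp_neg_integral_mul_le_of_hasDerivWithinAt hblow_cont hv (fun s hs => ?_) t ht
  refine neg_mul_dotProduct_le_dotProduct_absB_mulVec hc (hw_nonneg s (mem_Ici_of_Ioi hs)) ?_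
  rw [hblow, ← halpha']
  exact fun k => le_ciSup (f := fun k => alpha k s) (Finite.bddAbove_range _) k

/-- Theorem 4 (lower bound) for a Markov chain with absorption in zero: with
`α_k = ∑_{j≠k} q_{kj} − ∑_{i≠k} (dᵢ/dₖ) q_{ki}` and `β₋ = max_k α_k`, if
`z*(0) − z**(0) ≥ 0` componentwise then
`‖D(z*(t) − z**(t))‖₁ ≥ exp(−∫₀ᵗ β₋) ‖D(z*(0) − z**(0))‖₁`. -/
theorem absorbing_lower_bound
    (S : ℕ) (hS : 1 ≤ S)
    (q : ℕ → ℕ → ℝ → ℝ) (d : ℕ → ℝ)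
    (hq : ∀ i j, i ≤ S → j ≤ S → i ≠ j →
      ContinuousOn (q i j) (Ici 0) ∧ ∀ t ∈ Ici (0 : ℝ), 0 ≤ q i j t)
    (habs : ∀ j, 1 ≤ j → ∀ t, q 0 j t = 0)
    (hd : ∀ k, 1 ≤ k → k ≤ S → 0 < d k)
    (D : Matrix (Fin S) (Fin S) ℝ)
    (hD : D = Matrix.diagonal (fun i : Fin S => d ((i : ℕ) + 1)))
    (alpha : Fin S → ℝ → ℝ)
    (halpha : ∀ k t, alpha k t =
      (∑ j ∈ (Finset.range (S + 1)).erase ((k : ℕ) + 1), q ((k : ℕ) + 1) j t) -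
        ∑ i ∈ (Finset.Icc 1 S).erase ((k : ℕ) + 1),
          d i / d ((k : ℕ) + 1) * q ((k : ℕ) + 1) i t)
    (blow : ℝ → ℝ) (hblow : ∀ t, blow t = ⨆ k, alpha k t)
    (z₁ z₂ : ℝ → Fin S → ℝ)
    (hz₁ : ∀ t ∈ Ici (0 : ℝ), ∀ i, HasDerivWithinAt (fun s => z₁ s i)
      ((absB S q t).mulVec (z₁ t) i) (Ici 0) t)
    (hz₂ : ∀ t ∈ Ici (0 : ℝ), ∀ i, HasDerivWithinAt (fun s => z₂ s i)
      ((absB S q t).mulVec (z₂ t) i) (Ici 0) t)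
    (hinit : ∀ i, 0 ≤ z₁ 0 i - z₂ 0 i) :
    ∀ t ∈ Ici (0 : ℝ),
      Real.exp (-∫ τ in (0 : ℝ)..t, blow τ) * ∑ i, |D.mulVec (z₁ 0 - z₂ 0) i| ≤
        ∑ i, |D.mulVec (z₁ t - z₂ t) i| :=
  absorbing_lower_bound_general S q d hq hd D hD alpha halpha blow hblow z₁ z₂ hz₁ hz₂ hinit
end
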